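/- arXiv:0801.1265 — 2 statements merged into one kernel-verified Lean document; each statement's English description precedes it below -/
import Mathlib

section
/- Let (P^n)_{n≥1} be a time consistent family of coherent exchangeable lower previsions on ℒ(𝒳^n), with count distributions Q^n(h) := P^n(h∘T^n), and let S be the unique coherent lower prevision on 𝒱(Σ_𝒳) with Q^n(g) = S(CoMn^n(g|·)) for all n and g. Let f be a gamble on 𝒳 and let h : ℝ → ℝ be continuous. Then the sequence n ↦ Q^n(m ↦ h((1/n) Σ_x m_x f(x))) converges (convergence in distribution of the sample means); moreover, if h is a polynomial function, the limit equals S(θ ↦ h(Σ_x θ_x f(x))). -/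
open Finset Filter Topology

/-- A coherent lower prevision on the gambles over a finite nonempty space `Ω`. -/
def LowerPrevCoherent {Ω : Type*} [Fintype Ω] [Nonempty Ω] (P : (Ω → ℝ) → ℝ) : Prop :=
  (∀ f : Ω → ℝ, sInf (Set.range f) ≤ P f) ∧
  (∀ (f : Ω → ℝ) (l : ℝ), 0 ≤ l → P (fun ω => l * f ω) = l * P f) ∧
  (∀ f g : Ω → ℝ, P f + P g ≤ P (f + g))

/-- A linear prevision on the gambles over a finite nonempty space `Ω`. -/
def LinearPrevision {Ω : Type*} [Fintype Ω] [Nonempty Ω] (P : (Ω → ℝ) → ℝ) : Prop :=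
  (∀ f g : Ω → ℝ, P (f + g) = P f + P g) ∧
  (∀ (l : ℝ) (f : Ω → ℝ), P (fun ω => l * f ω) = l * P f) ∧
  (∀ f : Ω → ℝ, (∀ ω, 0 ≤ f ω) → 0 ≤ P f) ∧
  P (fun _ => 1) = 1

/-- Exchangeability of a lower prevision on gambles on `X^N`:
`P (πf − f) ≥ 0` for every gamble `f` and every permutation `π`. -/
def Exchangeable {X : Type*} {N : ℕ} (P : ((Fin N → X) → ℝ) → ℝ) : Prop :=
  ∀ (f : (Fin N → X) → ℝ) (π : Equiv.Perm (Fin N)),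
    0 ≤ P (fun x => f (fun k => x (π k)) - f x)

/-- The set of count vectors `𝒩^n`. -/
abbrev CVec (X : Type*) [Fintype X] (n : ℕ) : Type _ := {m : X → ℕ // ∑ x, m x = n}

noncomputable instance {X : Type*} [Fintype X] [DecidableEq X] (n : ℕ) : Fintype (CVec X n) := by
  have key : ∀ (m : CVec X n) (x : X), m.1 x < n + 1 := by
    intro m x
    have h1 : m.1 x ≤ ∑ y, m.1 y :=
      Finset.single_le_sum (fun i _ => Nat.zero_le _) (Finset.mem_univ x)
    have h2 := m.2
    omega
  exact Fintype.ofInjective (fun m : CVec X n => fun x => (⟨m.1 x, key m x⟩ : Fin (n+1)))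
    (fun a b hab => Subtype.ext (funext fun x => congrArg Fin.val (congrFun hab x)))

instance {X : Type*} [Fintype X] [DecidableEq X] [Nonempty X] (n : ℕ) :
    Nonempty (CVec X n) :=
  ⟨⟨fun x => if x = Classical.arbitrary X then n else 0, by simp⟩⟩

/-- The counting map `T^n : X^n → 𝒩^n`. -/
def countMap {X : Type*} [Fintype X] [DecidableEq X] (n : ℕ) (z : Fin n → X) : CVec X n :=
  ⟨fun x => (Finset.univ.filter fun k => z k = x).card, by
    have h := Finset.card_eq_sum_card_fiberwise (f := z) (s := Finset.univ) (t := Finset.univ)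
      (fun k _ => Finset.mem_univ (z k))
    simpa using h.symm⟩

/-- `ν(m) = n!/∏ₓ mₓ!` for a count vector `m ∈ 𝒩^n`. -/
def nu {X : Type*} [Fintype X] {n : ℕ} (m : CVec X n) : ℕ :=
  Nat.multinomial Finset.univ m.1

/-- `ν(μ − m)`, which is `0` unless `m ≤ μ` componentwise. -/
def nuSub {X : Type*} [Fintype X] {n k : ℕ} (μ : CVec X (n + k)) (m : CVec X n) : ℕ :=
  if ∀ x, m.1 x ≤ μ.1 x then Nat.multinomial Finset.univ (fun x => μ.1 x - m.1 x) else 0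

/-- The multiple hyper-geometric prevision `MuHy^n(f|m) = (1/ν(m)) ∑_{z∈[m]} f(z)`. -/
noncomputable def MuHy {X : Type*} [Fintype X] [DecidableEq X] {n : ℕ}
    (f : (Fin n → X) → ℝ) (m : CVec X n) : ℝ :=
  (∑ z ∈ Finset.univ.filter fun z : Fin n → X => countMap n z = m, f z) / (nu m : ℝ)

/-- The `X`-simplex `Σ_X`, as a subtype of `X → ℝ`. -/
abbrev SimplexPt (X : Type*) [Fintype X] : Type _ :=
  {θ : X → ℝ // (∀ x, 0 ≤ θ x) ∧ ∑ x, θ x = 1}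

/-- The Bernstein basis polynomial `B_m(θ) = ν(m) ∏ₓ θₓ^{mₓ}`. -/
noncomputable def Bern {X : Type*} [Fintype X] {n : ℕ} (m : CVec X n) (θ : X → ℝ) : ℝ :=
  (nu m : ℝ) * ∏ x, θ x ^ m.1 x

/-- The count multinomial expectation `CoMn^n(g|θ) = ∑_m g(m) B_m(θ)`. -/
noncomputable def CoMn {X : Type*} [Fintype X] [DecidableEq X] {n : ℕ} (g : CVec X n → ℝ) (θ : X → ℝ) : ℝ :=
  ∑ m : CVec X n, g m * Bern m θ

/-- The multinomial expectation `Mn^n(f|θ) = ∑_z f(z) ∏ₓ θₓ^{Tₓ(z)}`. -/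
noncomputable def Mn {X : Type*} [Fintype X] [DecidableEq X] {n : ℕ}
    (f : (Fin n → X) → ℝ) (θ : X → ℝ) : ℝ :=
  ∑ z : Fin n → X, f z * ∏ x, θ x ^ (countMap n z).1 x

/-- `CoMn^n(g|·)` as a function on the simplex. -/
noncomputable def CoMnP {X : Type*} [Fintype X] [DecidableEq X] {n : ℕ} (g : CVec X n → ℝ)
    (θ : SimplexPt X) : ℝ :=
  CoMn g θ.1

/-- `Mn^n(f|·)` as a function on the simplex. -/
noncomputable def MnP {X : Type*} [Fintype X] [DecidableEq X] {n : ℕ}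
    (f : (Fin n → X) → ℝ) (θ : SimplexPt X) : ℝ :=
  Mn f θ.1

/-- Polynomial gambles on the simplex: the set `𝒱(Σ_X)`. -/
def IsPolyGamble {X : Type*} [Fintype X] [DecidableEq X] (p : SimplexPt X → ℝ) : Prop :=
  ∃ n : ℕ, 1 ≤ n ∧ ∃ g : CVec X n → ℝ, p = fun θ => CoMnP g θ

/-- Coherence of a functional on the linear space `𝒱(Σ_X)` of polynomial gambles. -/
def CoherentOnPoly {X : Type*} [Fintype X] [DecidableEq X] (S : (SimplexPt X → ℝ) → ℝ) : Prop :=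
  (∀ p, IsPolyGamble p → sInf (Set.range p) ≤ S p) ∧
  (∀ p, IsPolyGamble p → ∀ l : ℝ, 0 ≤ l → S (fun θ => l * p θ) = l * S p) ∧
  (∀ p q, IsPolyGamble p → IsPolyGamble q → S p + S q ≤ S (p + q))

/-- Cylindrical extension of a gamble on `X^n` to `X^{n+k}`. -/
def cylExt {X : Type*} {n k : ℕ} (f : (Fin n → X) → ℝ) : (Fin (n + k) → X) → ℝ :=
  fun z => f fun i => z (Fin.castLE (Nat.le_add_right n k) i)

/-- Time consistency of a family of lower previsions on the `X^n`. -/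
def PTimeConsistent {X : Type*} (P : ∀ n : ℕ, ((Fin n → X) → ℝ) → ℝ) : Prop :=
  ∀ n : ℕ, 1 ≤ n → ∀ (k : ℕ) (f : (Fin n → X) → ℝ), P n f = P (n + k) (cylExt f)

/-- Time consistency of a family of count lower previsions on the `𝒩^n`. -/
def QTimeConsistent {X : Type*} [Fintype X] [DecidableEq X] (Q : ∀ n : ℕ, (CVec X n → ℝ) → ℝ) : Prop :=
  ∀ n : ℕ, 1 ≤ n → ∀ (k : ℕ) (h : CVec X n → ℝ),
    Q n h = Q (n + k) (fun μ => ∑ m : CVec X n, ((nuSub μ m : ℝ) * (nu m : ℝ) / (nu μ : ℝ)) * h m)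

/-- The relative frequency vector `m/n ∈ Σ_X` of a count vector `m ∈ 𝒩^n`, `n ≥ 1`. -/
noncomputable def freqPt {X : Type*} [Fintype X] {n : ℕ} (hn : 0 < n) (m : CVec X n) :
    SimplexPt X :=
  ⟨fun x => (m.1 x : ℝ) / n,
   fun x => div_nonneg (Nat.cast_nonneg _) (Nat.cast_nonneg _),
   by
    rw [← Finset.sum_div]
    have h : (∑ x, (m.1 x : ℝ)) = (n : ℝ) := by exact_mod_cast m.2
    rw [h]
    exact div_self (Nat.cast_ne_zero.mpr hn.ne')⟩

/-- `ḡ(μ) = ∑_m (ν(m) ν(μ−m) / ν(μ)) g(m)`. -/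
noncomputable def gbar {X : Type*} [Fintype X] [DecidableEq X] {n k : ℕ}
    (g : CVec X n → ℝ) (μ : CVec X (n + k)) : ℝ :=
  ∑ m : CVec X n, ((nu m : ℝ) * (nuSub μ m : ℝ) / (nu μ : ℝ)) * g m

section Aux
set_option linter.unusedSectionVars false
open Nat in
lemma descFactorial_cast_real {a k : ℕ} (h : k ≤ a) :
    (a.descFactorial k : ℝ) = (a ! : ℝ) / ((a - k)! : ℝ) := by
  rw [eq_div_iff (by positivity)]
  rw [← Nat.cast_mul, mul_comm, Nat.factorial_mul_descFactorial h]

variable {X : Type*} [Fintype X] [DecidableEq X]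

lemma countMap_apply (n : ℕ) (z : Fin n → X) (x : X) :
    (countMap n z).1 x = ∑ k : Fin n, if z k = x then 1 else 0 := by
  rw [show (countMap n z).1 x = (Finset.univ.filter fun k => z k = x).card from rfl,
    Finset.card_filter]

lemma countMap_snoc (n : ℕ) (w : Fin n → X) (y : X) (x : X) :
    (countMap (n+1) (Fin.snoc w y)).1 x
      = (countMap n w).1 x + (if y = x then 1 else 0) := by
  rw [countMap_apply, countMap_apply, Fin.sum_univ_castSucc]
  simp

lemma nu_real (n : ℕ) (m : CVec X n) :
    (nu m : ℝ) * ∏ x, ((m.1 x).factorial : ℝ) = (n.factorial : ℝ) := by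
  have h := Nat.multinomial_spec Finset.univ m.1
  rw [m.2] at h
  rw [show nu m = Nat.multinomial Finset.univ m.1 from rfl, ← h]
  push_cast
  ring

lemma card_fiber (n : ℕ) (m : CVec X n) :
    (Finset.univ.filter fun z : Fin n → X => countMap n z = m).card = nu m := by
  induction n with
  | zero =>
    have hm : ∀ x, m.1 x = 0 := by
      intro x
      have := m.2
      have h1 : m.1 x ≤ ∑ y, m.1 y :=
        Finset.single_le_sum (fun i _ => Nat.zero_le _) (Finset.mem_univ x)
      omega
    have hall : ∀ z : Fin 0 → X, countMap 0 z = m := by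
      intro z
      apply Subtype.ext; funext x
      rw [countMap_apply, hm x]; simp
    rw [Finset.filter_true_of_mem fun z _ => hall z]
    have hnu : nu m = 1 := by
      have h := Nat.multinomial_spec Finset.univ m.1
      simp only [nu]
      simp [hm] at h ⊢
      omega
    simp [hnu, Finset.card_univ]
  | succ n ih =>
    -- compute each piece
    have hpiece : ∀ x : X,
        ((Finset.univ.filter fun z : Fin (n+1) → X => countMap (n+1) z = m).filter
          fun z => z (Fin.last n) = x).card * ∏ y, (m.1 y).factorial
        = m.1 x * n.factorial := by
      intro x
      by_cases hx : m.1 x = 0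
      · have : ((Finset.univ.filter fun z : Fin (n+1) → X => countMap (n+1) z = m).filter
          fun z => z (Fin.last n) = x) = ∅ := by
          apply Finset.filter_eq_empty_iff.2
          intro z hz
          rw [Finset.mem_filter] at hz
          intro hlast
          have h1 : 1 ≤ (countMap (n+1) z).1 x := by
            rw [countMap_apply]
            calc (1:ℕ) = if z (Fin.last n) = x then 1 else 0 := by rw [if_pos hlast]
            _ ≤ ∑ k : Fin (n+1), if z k = x then 1 else 0 :=
              Finset.single_le_sum (f := fun k : Fin (n+1) => if z k = x then 1 else 0)
                (fun i _ => Nat.zero_le _) (Finset.mem_univ _)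
          rw [hz.2] at h1; omega
        rw [this, hx]; simp
      · -- m.1 x ≥ 1 : biject with the fiber of m' over Fin n → X
        have hsum : ∑ y, (m.1 y - if y = x then 1 else 0) = n := by
          have h1 : ∑ y, (m.1 y - if y = x then 1 else 0)
              + ∑ y, (if y = x then 1 else 0) = ∑ y, m.1 y := by
            rw [← Finset.sum_add_distrib]
            apply Finset.sum_congr rfl
            intro y _
            by_cases hy : y = x <;> simp [hy] <;> omega
          rw [m.2] at h1
          simp at h1
          omega
        set m' : CVec X n := ⟨fun y => m.1 y - if y = x then 1 else 0, hsum⟩ with hm'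
        have hcard : ((Finset.univ.filter fun z : Fin (n+1) → X => countMap (n+1) z = m).filter
            fun z => z (Fin.last n) = x).card
            = (Finset.univ.filter fun w : Fin n → X => countMap n w = m').card := by
          refine Finset.card_bij' (fun z _ => Fin.init z) (fun w _ => Fin.snoc w x)
            ?hi ?hj ?li ?ri
          case hi =>
            intro z hz
            simp only [Finset.mem_filter] at hz ⊢
            obtain ⟨⟨-, hc⟩, hlast⟩ := hz
            refine ⟨Finset.mem_univ _, Subtype.ext (funext fun y => ?_)⟩
            have hz' : z = Fin.snoc (Fin.init z) x := by
              rw [← hlast, Fin.snoc_init_self]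
            have := countMap_snoc n (Fin.init z) x y
            rw [← hz', hc] at this
            show (countMap n (Fin.init z)).1 y = m.1 y - if y = x then 1 else 0
            by_cases hy : y = x
            · subst hy
              simp only [if_pos rfl] at this ⊢
              omega
            · rw [if_neg hy]
              rw [if_neg fun h => hy h.symm] at this
              omega
          case hj =>
            intro w hw
            simp only [Finset.mem_filter] at hw ⊢
            refine ⟨⟨Finset.mem_univ _, Subtype.ext (funext fun y => ?_)⟩, by simp⟩
            rw [countMap_snoc, hw.2]
            show (m.1 y - if y = x then 1 else 0) + (if x = y then 1 else 0) = m.1 y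
            by_cases hy : y = x
            · subst hy
              simp
              omega
            · rw [if_neg hy, if_neg fun h => hy h.symm]
              omega
          case li =>
            intro z hz
            simp only [Finset.mem_filter] at hz
            show Fin.snoc (Fin.init z) x = z
            conv_rhs => rw [← Fin.snoc_init_self z]
            exact congrArg (Fin.snoc (Fin.init z)) hz.2.symm
          case ri =>
            intro w _
            simp
        rw [hcard, ih m']
        -- now the numeric identity
        have hfac : ∏ y, (m.1 y).factorial = m.1 x * ∏ y, (m'.1 y).factorial := by
          rw [← Finset.mul_prod_erase Finset.univ _ (Finset.mem_univ x),
              ← Finset.mul_prod_erase Finset.univ (fun y => (m'.1 y).factorial)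
                (Finset.mem_univ x)]
          have h1 : m'.1 x = m.1 x - 1 := by simp [hm']
          have h2 : (m.1 x).factorial = m.1 x * (m.1 x - 1).factorial := by
            obtain ⟨k, hk⟩ := Nat.exists_eq_succ_of_ne_zero hx
            rw [hk]; simp [Nat.factorial_succ]
          have h3 : ∀ y ∈ Finset.univ.erase x, (m.1 y).factorial = (m'.1 y).factorial := by
            intro y hy
            have := Finset.ne_of_mem_erase hy
            simp [hm', this]
          rw [Finset.prod_congr rfl h3, h1, h2]
          ring
        have hspec := Nat.multinomial_spec Finset.univ m'.1
        rw [m'.2] at hspec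
        rw [hfac]
        calc nu m' * (m.1 x * ∏ y, (m'.1 y).factorial)
            = m.1 x * ((∏ y, (m'.1 y).factorial) * Nat.multinomial Finset.univ m'.1) := by
              rw [show nu m' = Nat.multinomial Finset.univ m'.1 from rfl]; ring
          _ = m.1 x * n.factorial := by rw [hspec]
    -- sum up
    have hpart := Finset.card_eq_sum_card_fiberwise
      (f := fun z : Fin (n+1) → X => z (Fin.last n))
      (s := Finset.univ.filter fun z : Fin (n+1) → X => countMap (n+1) z = m)
      (t := Finset.univ) (fun z _ => Finset.mem_univ _)
    rw [hpart]
    have hKpos : 0 < ∏ y, (m.1 y).factorial := by positivity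
    apply Nat.eq_of_mul_eq_mul_right hKpos
    rw [Finset.sum_mul]
    calc (∑ x : X, ((Finset.univ.filter fun z : Fin (n+1) → X => countMap (n+1) z = m).filter
            fun z => z (Fin.last n) = x).card * ∏ y, (m.1 y).factorial)
        = ∑ x : X, m.1 x * n.factorial := Finset.sum_congr rfl fun x _ => hpiece x
      _ = (∑ x : X, m.1 x) * n.factorial := by rw [Finset.sum_mul]
      _ = (n+1).factorial := by rw [m.2, Nat.factorial_succ]
      _ = nu m * ∏ y, (m.1 y).factorial := by
          have hspec := Nat.multinomial_spec Finset.univ m.1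
          rw [m.2] at hspec
          rw [show nu m = Nat.multinomial Finset.univ m.1 from rfl, ← hspec]
          ring
end Aux

section Aux2
set_option linter.unusedSectionVars false
variable {X : Type*} [Fintype X] [DecidableEq X]

/-- product over coordinates equals product over values with count exponents -/
lemma prod_pow_count (n : ℕ) (z : Fin n → X) (θ : X → ℝ) :
    ∏ x, θ x ^ (countMap n z).1 x = ∏ k, θ (z k) := by
  have h := Finset.prod_fiberwise_of_maps_to (g := z) (s := Finset.univ) (t := Finset.univ)
    (fun k _ => Finset.mem_univ (z k)) (fun k => θ (z k))
  rw [← h]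
  apply Finset.prod_congr rfl
  intro x _
  rw [show (countMap n z).1 x = (Finset.univ.filter fun k => z k = x).card from rfl]
  rw [← Finset.prod_const]
  apply Finset.prod_congr rfl
  intro k hk
  rw [Finset.mem_filter] at hk
  rw [hk.2]

lemma countMap_append (a b : ℕ) (w : Fin a → X) (v : Fin b → X) (x : X) :
    (countMap (a+b) (Fin.append w v)).1 x = (countMap a w).1 x + (countMap b v).1 x := by
  rw [countMap_apply, countMap_apply, countMap_apply, Fin.sum_univ_add]
  simp

/-- the fiber-restricted sum splits into a sum over prefixes -/
lemma fibSum_split (a b : ℕ) (m : CVec X (a+b)) (F : (Fin a → X) → ℝ) :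
    ∑ z ∈ Finset.univ.filter (fun z : Fin (a+b) → X => countMap (a+b) z = m),
        F (fun i => z (Fin.castAdd b i))
      = ∑ w : Fin a → X, F w *
          (((Finset.univ.filter fun v : Fin b → X =>
            ∀ x, (countMap a w).1 x + (countMap b v).1 x = m.1 x).card : ℕ) : ℝ) := by
  rw [Finset.sum_filter]
  rw [← Equiv.sum_comp (Fin.appendEquiv a b)
    (fun z => if countMap (a+b) z = m then F (fun i => z (Fin.castAdd b i)) else 0)]
  rw [Fintype.sum_prod_type]
  apply Finset.sum_congr rfl
  intro w _
  have hinner : ∀ v : Fin b → X,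
      (if countMap (a+b) (Fin.appendEquiv a b (w, v)) = m
        then F (fun i => (Fin.appendEquiv a b (w, v)) (Fin.castAdd b i)) else 0)
      = (if (∀ x, (countMap a w).1 x + (countMap b v).1 x = m.1 x) then F w else 0) := by
    intro v
    have h1 : (fun i => (Fin.appendEquiv a b (w, v)) (Fin.castAdd b i)) = w := by
      funext i
      show Fin.append w v (Fin.castAdd b i) = w i
      rw [Fin.append_left]
    have h2 : (countMap (a+b) (Fin.appendEquiv a b (w, v)) = m)
        ↔ (∀ x, (countMap a w).1 x + (countMap b v).1 x = m.1 x) := by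
      rw [Subtype.ext_iff, funext_iff]
      constructor
      · intro hh x; rw [← countMap_append]; exact hh x
      · intro hh x; rw [show ((Fin.appendEquiv a b) (w, v)) = Fin.append w v from rfl,
          countMap_append]; exact hh x
    rw [h1]
    by_cases hc : ∀ x, (countMap a w).1 x + (countMap b v).1 x = m.1 x
    · rw [if_pos hc, if_pos (h2.2 hc)]
    · rw [if_neg hc, if_neg (fun hh => hc (h2.1 hh))]
  rw [Finset.sum_congr rfl (fun v _ => hinner v)]
  rw [Finset.sum_ite, Finset.sum_const_zero, Finset.sum_const, add_zero]
  rw [nsmul_eq_mul, mul_comm]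

/-- the filter of indices `< j` in `Fin n` as an embedded copy of `Fin j` -/
lemma filter_lt_eq_map (n j : ℕ) (hj : j ≤ n) :
    (Finset.univ.filter fun i : Fin n => (i : ℕ) < j)
      = Finset.map ⟨fun k : Fin j => (⟨k.1, lt_of_lt_of_le k.2 hj⟩ : Fin n),
          by intro k k' hkk; simp only [Fin.mk.injEq] at hkk; exact Fin.ext hkk⟩ Finset.univ := by
  ext i
  simp only [Finset.mem_filter, Finset.mem_map, Finset.mem_univ, true_and,
    Function.Embedding.coeFn_mk]
  constructor
  · intro hi
    exact ⟨⟨i.1, hi⟩, Fin.ext rfl⟩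
  · rintro ⟨k, rfl⟩
    exact k.2

lemma card_filter_lt (n j : ℕ) (hj : j ≤ n) :
    (Finset.univ.filter fun i : Fin n => (i : ℕ) < j).card = j := by
  rw [filter_lt_eq_map n j hj, Finset.card_map, Finset.card_univ, Fintype.card_fin]

end Aux2

section Aux3
set_option linter.unusedSectionVars false
variable {X : Type*} [Fintype X] [DecidableEq X]

lemma nu_pos_real {n : ℕ} (m : CVec X n) : (0:ℝ) < (nu m : ℝ) := by
  have : 0 < nu m := Nat.multinomial_pos Finset.univ m.1
  exact_mod_cast this

/-- the product of `f` over the first `j` coordinates -/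
noncomputable def prodFirst (f : X → ℝ) (n j : ℕ) : (Fin n → X) → ℝ :=
  fun z => ∏ i ∈ Finset.univ.filter (fun i : Fin n => (i : ℕ) < j), f (z i)

lemma Mn_prodFirst (f : X → ℝ) (n j : ℕ) (hj : j ≤ n) (θ : X → ℝ) :
    Mn (prodFirst f n j) θ = (∑ x, θ x * f x) ^ j * (∑ x, θ x) ^ (n - j) := by
  unfold Mn prodFirst
  have step1 : ∀ z : Fin n → X,
      (∏ i ∈ Finset.univ.filter (fun i : Fin n => (i : ℕ) < j), f (z i))
          * ∏ x, θ x ^ (countMap n z).1 x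
        = ∏ k : Fin n, (if (k : ℕ) < j then θ (z k) * f (z k) else θ (z k)) := by
    intro z
    rw [prod_pow_count]
    rw [Finset.prod_ite (fun k : Fin n => θ (z k) * f (z k)) (fun k : Fin n => θ (z k))]
    rw [← Finset.prod_filter_mul_prod_filter_not Finset.univ (fun k : Fin n => (k : ℕ) < j)
        (fun k => θ (z k))]
    rw [Finset.prod_mul_distrib]
    ring
  rw [Finset.sum_congr rfl (fun z _ => step1 z)]
  rw [← Fintype.prod_sum (fun (k : Fin n) (x : X) =>
    if (k : ℕ) < j then θ x * f x else θ x)]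
  have step2 : ∀ k : Fin n,
      (∑ x, if (k : ℕ) < j then θ x * f x else θ x)
        = if (k : ℕ) < j then (∑ x, θ x * f x) else (∑ x, θ x) := by
    intro k
    split_ifs <;> rfl
  rw [Finset.prod_congr rfl (fun k _ => step2 k)]
  rw [Finset.prod_ite (fun _ => ∑ x, θ x * f x) (fun _ => ∑ x, θ x), Finset.prod_const,
    Finset.prod_const, card_filter_lt n j hj]
  congr 2
  rw [Finset.filter_not, Finset.card_sdiff_of_subset (Finset.filter_subset _ _), Finset.card_univ,
    Fintype.card_fin, card_filter_lt n j hj]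

lemma CoMn_MuHy (n : ℕ) (F : (Fin n → X) → ℝ) (θ : X → ℝ) :
    CoMn (fun m => MuHy F m) θ = Mn F θ := by
  unfold CoMn Bern MuHy Mn
  have step1 : ∀ m : CVec X n,
      (∑ z ∈ Finset.univ.filter fun z : Fin n → X => countMap n z = m, F z) / (nu m : ℝ)
          * ((nu m : ℝ) * ∏ x, θ x ^ m.1 x)
        = ∑ z ∈ Finset.univ.filter fun z : Fin n → X => countMap n z = m,
            F z * ∏ x, θ x ^ (countMap n z).1 x := by
    intro m
    have hnu := nu_pos_real m
    rw [div_mul_eq_mul_div, mul_comm ((nu m : ℝ)), mul_div_assoc, mul_div_assoc,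
      div_self hnu.ne', mul_one, Finset.sum_mul]
    apply Finset.sum_congr rfl
    intro z hz
    rw [Finset.mem_filter] at hz
    rw [hz.2]
  rw [Finset.sum_congr rfl (fun m _ => step1 m)]
  exact Finset.sum_fiberwise_of_maps_to (fun z _ => Finset.mem_univ _) _

end Aux3

section Aux4
set_option linter.unusedSectionVars false
set_option maxHeartbeats 1000000
variable {X : Type*} [Fintype X] [DecidableEq X]

lemma keybound (f : X → ℝ) (B : ℝ) (hB : ∀ x, |f x| ≤ B) (hB0 : 0 ≤ B)
    (j n : ℕ) (hj : j ≤ n) (hn : 0 < n) (m : CVec X n) :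
    |MuHy (prodFirst f n j) m - (((n : ℕ) : ℝ)⁻¹ * ∑ x, (m.1 x : ℝ) * f x) ^ j|
      ≤ B ^ j * (2 * (1 - ((n.descFactorial j : ℕ) : ℝ) / ((n : ℕ) : ℝ) ^ j)) := by
  obtain ⟨r, rfl⟩ : ∃ r, n = j + r := ⟨n - j, by omega⟩
  have hnR : (0:ℝ) < ((j + r : ℕ) : ℝ) := by exact_mod_cast hn
  set α : ℝ := (((j + r).descFactorial j : ℕ) : ℝ) / ((j + r : ℕ) : ℝ) ^ j with hα
  set Pw : (Fin j → X) → ℝ := fun w =>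
    (((Finset.univ.filter fun v : Fin r → X =>
      ∀ x, (countMap j w).1 x + (countMap r v).1 x = m.1 x).card : ℕ) : ℝ) / (nu m : ℝ)
    with hPw
  set Rw : (Fin j → X) → ℝ := fun w =>
    ∏ i : Fin j, ((m.1 (w i) : ℝ) / ((j + r : ℕ) : ℝ)) with hRw
  have hnum := nu_pos_real m
  -- (h1)
  have h1 : MuHy (prodFirst f (j + r) j) m = ∑ w : Fin j → X, (∏ i, f (w i)) * Pw w := by
    have hpf : ∀ z : Fin (j + r) → X, prodFirst f (j + r) j z = ∏ i : Fin j, f (z (Fin.castAdd r i)) := by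
      intro z
      rw [prodFirst, filter_lt_eq_map (j + r) j hj, Finset.prod_map]
      apply Finset.prod_congr rfl
      intro i _
      congr 1
    unfold MuHy
    rw [Finset.sum_congr rfl (fun z _ => hpf z)]
    rw [fibSum_split j r m (fun w => ∏ i, f (w i))]
    rw [Finset.sum_div]
    apply Finset.sum_congr rfl
    intro w _
    rw [hPw, mul_div_assoc]
  -- (h2)
  have h2 : (((j + r : ℕ) : ℝ)⁻¹ * ∑ x, (m.1 x : ℝ) * f x) ^ j
      = ∑ w : Fin j → X, (∏ i, f (w i)) * Rw w := by
    have ha : (((j + r : ℕ) : ℝ)⁻¹ * ∑ x, (m.1 x : ℝ) * f x)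
        = ∑ x, ((m.1 x : ℝ) / ((j + r : ℕ) : ℝ)) * f x := by
      rw [Finset.mul_sum]
      apply Finset.sum_congr rfl
      intro x _
      ring
    rw [ha, Fintype.sum_pow]
    apply Finset.sum_congr rfl
    intro w _
    rw [hRw, ← Finset.prod_mul_distrib]
    apply Finset.prod_congr rfl
    intro i _
    ring
  -- (h3)
  have h3 : ∑ w : Fin j → X, Pw w = 1 := by
    have hs := fibSum_split j r m (fun _ => (1:ℝ))
    rw [Finset.sum_const] at hs
    rw [card_fiber (j + r) m] at hs
    simp only [nsmul_eq_mul, mul_one, one_mul] at hs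
    rw [hPw]
    simp only []
    rw [← Finset.sum_div, ← hs, div_self hnum.ne']
  -- (h4)
  have h4 : ∑ w : Fin j → X, Rw w = 1 := by
    rw [hRw]
    rw [← Fintype.sum_pow (fun x => (m.1 x : ℝ) / ((j + r : ℕ) : ℝ)) j]
    rw [← Finset.sum_div]
    have : (∑ x, (m.1 x : ℝ)) = ((j + r : ℕ) : ℝ) := by exact_mod_cast m.2
    rw [this, div_self hnR.ne', one_pow]
  -- (h5)
  have h5 : ∀ w : Fin j → X, 0 ≤ Pw w ∧ 0 ≤ Rw w := by
    intro w
    constructor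
    · apply div_nonneg (Nat.cast_nonneg _) hnum.le
    · apply Finset.prod_nonneg
      intro i _
      apply div_nonneg (Nat.cast_nonneg _) hnR.le
  -- (h7)
  have h7 : 0 ≤ α ∧ α ≤ 1 := by
    constructor
    · apply div_nonneg (Nat.cast_nonneg _) (by positivity)
    · rw [hα, div_le_one (by positivity)]
      exact_mod_cast Nat.descFactorial_le_pow (j + r) j
  -- (h6)
  have h6 : ∀ w : Fin j → X, α * Pw w ≤ Rw w := by
    intro w
    by_cases hle : ∀ x, (countMap j w).1 x ≤ m.1 x
    · -- construct m₂
      have hsum2 : ∑ x, (m.1 x - (countMap j w).1 x) = r := by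
        have e1 : ∑ x, ((countMap j w).1 x) = j := (countMap j w).2
        have e2 : ∑ x, m.1 x = j + r := m.2
        have e3 : ∑ x, (m.1 x - (countMap j w).1 x) + ∑ x, (countMap j w).1 x
            = ∑ x, m.1 x := by
          rw [← Finset.sum_add_distrib]
          apply Finset.sum_congr rfl
          intro x _
          have := hle x
          omega
        omega
      set m₂ : CVec X r := ⟨fun x => m.1 x - (countMap j w).1 x, hsum2⟩ with hm₂
      have hNw : (Finset.univ.filter fun v : Fin r → X =>
          ∀ x, (countMap j w).1 x + (countMap r v).1 x = m.1 x).card = nu m₂ := by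
        rw [← card_fiber r m₂]
        congr 1
        apply Finset.filter_congr
        intro v _
        constructor
        · intro hv
          apply Subtype.ext; funext x
          have := hv x
          show (countMap r v).1 x = m.1 x - (countMap j w).1 x
          omega
        · intro hv x
          have : (countMap r v).1 x = m.1 x - (countMap j w).1 x := by rw [hv]
          have := hle x
          omega
      -- ℕ identity
      have hid : nu m₂ * (j + r).descFactorial j
          = nu m * ∏ x, (m.1 x).descFactorial ((countMap j w).1 x) := by
        have hK : 0 < ∏ x, (m.1 x).factorial := by positivity
        apply Nat.eq_of_mul_eq_mul_right hK
        have hKsplit : ∏ x, (m.1 x).factorial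
            = (∏ x, (m.1 x - (countMap j w).1 x).factorial)
              * ∏ x, (m.1 x).descFactorial ((countMap j w).1 x) := by
          rw [← Finset.prod_mul_distrib]
          apply Finset.prod_congr rfl
          intro x _
          exact (Nat.factorial_mul_descFactorial (hle x)).symm
        have hspec2 := Nat.multinomial_spec Finset.univ m₂.1
        rw [m₂.2] at hspec2
        have hspec := Nat.multinomial_spec Finset.univ m.1
        rw [m.2] at hspec
        have hdesc : r.factorial * (j + r).descFactorial j = (j + r).factorial := by
          have := Nat.factorial_mul_descFactorial (n := j + r) (k := j) hj
          rwa [show j + r - j = r by omega] at this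
        calc nu m₂ * (j + r).descFactorial j * ∏ x, (m.1 x).factorial
            = (((∏ x, (m₂.1 x).factorial) * Nat.multinomial Finset.univ m₂.1)
                * (j + r).descFactorial j)
              * ∏ x, (m.1 x).descFactorial ((countMap j w).1 x) := by
              rw [hKsplit, show nu m₂ = Nat.multinomial Finset.univ m₂.1 from rfl]
              have : ∏ x, (m₂.1 x).factorial
                  = ∏ x, (m.1 x - (countMap j w).1 x).factorial := rfl
              rw [this]; ring
          _ = (r.factorial * (j + r).descFactorial j)
              * ∏ x, (m.1 x).descFactorial ((countMap j w).1 x) := by rw [hspec2]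
          _ = (j + r).factorial * ∏ x, (m.1 x).descFactorial ((countMap j w).1 x) := by rw [hdesc]
          _ = ((∏ x, (m.1 x).factorial) * Nat.multinomial Finset.univ m.1)
              * ∏ x, (m.1 x).descFactorial ((countMap j w).1 x) := by rw [hspec]
          _ = nu m * (∏ x, (m.1 x).descFactorial ((countMap j w).1 x))
              * ∏ x, (m.1 x).factorial := by
              rw [show nu m = Nat.multinomial Finset.univ m.1 from rfl]; ring
      -- ℕ inequality
      have hineq : nu m₂ * (j + r).descFactorial j ≤ nu m * ∏ x, (m.1 x) ^ ((countMap j w).1 x) := by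
        rw [hid]
        apply Nat.mul_le_mul_left
        apply Finset.prod_le_prod'
        intro x _
        exact Nat.descFactorial_le_pow _ _
      -- convert to ℝ
      have hprodR : (∏ x, ((m.1 x : ℝ)) ^ ((countMap j w).1 x)) = ∏ i : Fin j, (m.1 (w i) : ℝ) :=
        prod_pow_count j w (fun x => (m.1 x : ℝ))
      have hRw' : Rw w = (∏ x, ((m.1 x : ℝ)) ^ ((countMap j w).1 x)) / ((j + r:ℕ):ℝ) ^ j := by
        rw [hRw, hprodR]
        simp only []
        rw [Finset.prod_div_distrib, Finset.prod_const]
        congr 1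
        rw [Finset.card_univ, Fintype.card_fin]
      rw [hRw', hα, hPw]
      simp only []
      rw [hNw]
      rw [div_mul_div_comm, div_le_div_iff₀ (by positivity) (by positivity)]
      have hcast : ((nu m₂ : ℝ)) * (((j + r).descFactorial j : ℕ) : ℝ)
          ≤ (nu m : ℝ) * ∏ x, ((m.1 x : ℝ)) ^ ((countMap j w).1 x) := by
        have := hineq
        calc ((nu m₂ : ℝ)) * (((j + r).descFactorial j : ℕ) : ℝ)
            = ((nu m₂ * (j + r).descFactorial j : ℕ) : ℝ) := by push_cast; ring
          _ ≤ ((nu m * ∏ x, (m.1 x) ^ ((countMap j w).1 x) : ℕ) : ℝ) := by exact_mod_cast this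
          _ = (nu m : ℝ) * ∏ x, ((m.1 x : ℝ)) ^ ((countMap j w).1 x) := by push_cast; ring
      calc (((j + r).descFactorial j : ℕ) : ℝ) * (nu m₂ : ℝ) * (((j + r:ℕ):ℝ) ^ j)
          ≤ ((nu m : ℝ) * ∏ x, ((m.1 x : ℝ)) ^ ((countMap j w).1 x)) * (((j + r:ℕ):ℝ) ^ j) := by
            apply mul_le_mul_of_nonneg_right _ (by positivity)
            rw [mul_comm (((j + r).descFactorial j : ℕ) : ℝ)]
            exact hcast
        _ = (∏ x, ((m.1 x : ℝ)) ^ ((countMap j w).1 x)) * (((j + r:ℕ):ℝ) ^ j * (nu m : ℝ)) := by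
            ring
    · -- empty fiber
      have hzero : (Finset.univ.filter fun v : Fin r → X =>
          ∀ x, (countMap j w).1 x + (countMap r v).1 x = m.1 x) = ∅ := by
        apply Finset.filter_eq_empty_iff.2
        intro v _
        intro hv
        apply hle
        intro x
        have := hv x
        omega
      have : Pw w = 0 := by rw [hPw]; simp only []; rw [hzero]; simp
      rw [this, mul_zero]
      exact (h5 w).2
  -- final combination
  rw [h1, h2, ← Finset.sum_sub_distrib]
  have hptwise : ∀ w : Fin j → X,
      |(∏ i, f (w i)) * Pw w - (∏ i, f (w i)) * Rw w| ≤ B ^ j * |Pw w - Rw w| := by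
    intro w
    rw [← mul_sub, abs_mul]
    apply mul_le_mul_of_nonneg_right _ (abs_nonneg _)
    rw [abs_prod]
    calc ∏ i, |f (w i)| ≤ ∏ i : Fin j, B := by
          apply Finset.prod_le_prod
          · intro i _; exact abs_nonneg _
          · intro i _; exact hB (w i)
      _ = B ^ j := by rw [Finset.prod_const, Finset.card_univ, Fintype.card_fin]
  have habs : ∀ w : Fin j → X, |Pw w - Rw w| ≤ (Pw w - Rw w) + 2 * (Rw w - α * Pw w) := by
    intro w
    have hp := (h5 w).1
    have hr := (h5 w).2
    have h6w := h6 w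
    have hα1 := h7.2
    have : α * Pw w ≤ Pw w := by nlinarith
    rw [abs_le]
    constructor <;> nlinarith
  calc |∑ w : Fin j → X, ((∏ i, f (w i)) * Pw w - (∏ i, f (w i)) * Rw w)|
      ≤ ∑ w : Fin j → X, |(∏ i, f (w i)) * Pw w - (∏ i, f (w i)) * Rw w| :=
        Finset.abs_sum_le_sum_abs _ _
    _ ≤ ∑ w : Fin j → X, B ^ j * |Pw w - Rw w| :=
        Finset.sum_le_sum (fun w _ => hptwise w)
    _ ≤ ∑ w : Fin j → X, B ^ j * ((Pw w - Rw w) + 2 * (Rw w - α * Pw w)) := by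
        apply Finset.sum_le_sum
        intro w _
        exact mul_le_mul_of_nonneg_left (habs w) (by positivity)
    _ = B ^ j * (2 * (1 - α)) := by
        rw [← Finset.mul_sum]
        congr 1
        rw [Finset.sum_add_distrib, Finset.sum_sub_distrib, h3, h4]
        rw [← Finset.mul_sum, Finset.sum_sub_distrib, h4, ← Finset.mul_sum, h3]
        ring

end Aux4

section Aux5
set_option linter.unusedSectionVars false
set_option maxHeartbeats 1000000
variable {X : Type*} [Fintype X] [DecidableEq X] [Nonempty X]

lemma P_lip {n : ℕ} (P : ((Fin n → X) → ℝ) → ℝ) (hP : LowerPrevCoherent P)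
    (a b : (Fin n → X) → ℝ) (c : ℝ) (hc : ∀ z, |a z - b z| ≤ c) : |P a - P b| ≤ c := by
  obtain ⟨h1, h2, h3⟩ := hP
  have key : ∀ u v : (Fin n → X) → ℝ, (∀ z, |u z - v z| ≤ c) → P u - P v ≤ c := by
    intro u v huv
    have hadd := h3 u (v - u)
    have heq : u + (v - u) = v := by funext z; simp
    rw [heq] at hadd
    have hinf : -c ≤ sInf (Set.range (v - u)) := by
      apply le_csInf (Set.range_nonempty _)
      rintro t ⟨z, rfl⟩
      have h := abs_le.1 (huv z)
      simp only [Pi.sub_apply]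
      linarith [h.2]
    have := h1 (v - u)
    linarith
  have ha := key a b hc
  have hb := key b a (fun z => by rw [abs_sub_comm]; exact hc z)
  rw [abs_le]
  constructor <;> linarith

lemma alpha_lim (j : ℕ) :
    Tendsto (fun n : ℕ => ((n.descFactorial j : ℕ) : ℝ) / ((n : ℕ) : ℝ) ^ j)
      atTop (𝓝 1) := by
  have hev : (fun n : ℕ => ∏ i ∈ Finset.range j, (1 - (i : ℝ) / ((n : ℕ) : ℝ)))
      =ᶠ[atTop] fun n : ℕ => ((n.descFactorial j : ℕ) : ℝ) / ((n : ℕ) : ℝ) ^ j := by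
    filter_upwards [eventually_ge_atTop (max j 1)] with n hn
    have hj : j ≤ n := le_trans (le_max_left _ _) hn
    have hn1 : 1 ≤ n := le_trans (le_max_right _ _) hn
    have hnR : (0:ℝ) < (n : ℝ) := by exact_mod_cast hn1
    rw [Nat.descFactorial_eq_prod_range]
    rw [Nat.cast_prod]
    have hcast : ∀ i ∈ Finset.range j, ((n - i : ℕ) : ℝ) = (n : ℝ) - (i : ℝ) := by
      intro i hi
      rw [Finset.mem_range] at hi
      have : i ≤ n := by omega
      push_cast [this]
      ring
    rw [Finset.prod_congr rfl hcast]
    rw [show ((n:ℕ):ℝ) ^ j = ∏ _i ∈ Finset.range j, (n : ℝ) by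
      rw [Finset.prod_const, Finset.card_range]]
    rw [← Finset.prod_div_distrib]
    apply Finset.prod_congr rfl
    intro i _
    rw [sub_div, div_self hnR.ne']
  have hlim : Tendsto (fun n : ℕ => ∏ i ∈ Finset.range j, (1 - (i : ℝ) / ((n : ℕ) : ℝ)))
      atTop (𝓝 (∏ _i ∈ Finset.range j, (1:ℝ))) := by
    apply tendsto_finset_prod
    intro i _
    have h0 := tendsto_const_div_atTop_nhds_zero_nat (i : ℝ)
    have := h0.const_sub 1
    simpa using this
  rw [Finset.prod_const_one] at hlim
  exact hlim.congr' hev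

variable (f : X → ℝ)

lemma CoMn_Gstar (q : Polynomial ℝ) (n : ℕ) (hdeg : q.natDegree ≤ n) (θ : SimplexPt X) :
    CoMn (fun m : CVec X n =>
        MuHy (fun z => ∑ j ∈ q.support, q.coeff j * prodFirst f n j z) m) θ.1
      = Polynomial.eval (∑ x, θ.1 x * f x) q := by
  rw [CoMn_MuHy]
  have hlin : Mn (fun z => ∑ j ∈ q.support, q.coeff j * prodFirst f n j z) θ.1
      = ∑ j ∈ q.support, q.coeff j * Mn (prodFirst f n j) θ.1 := by
    unfold Mn
    calc ∑ z : Fin n → X, (∑ j ∈ q.support, q.coeff j * prodFirst f n j z)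
          * ∏ x, θ.1 x ^ (countMap n z).1 x
        = ∑ z : Fin n → X, ∑ j ∈ q.support,
            q.coeff j * (prodFirst f n j z * ∏ x, θ.1 x ^ (countMap n z).1 x) := by
          apply Finset.sum_congr rfl
          intro z _
          rw [Finset.sum_mul]
          apply Finset.sum_congr rfl
          intro j _
          ring
      _ = ∑ j ∈ q.support, ∑ z : Fin n → X,
            q.coeff j * (prodFirst f n j z * ∏ x, θ.1 x ^ (countMap n z).1 x) :=
          Finset.sum_comm
      _ = ∑ j ∈ q.support, q.coeff j * ∑ z : Fin n → X,
            prodFirst f n j z * ∏ x, θ.1 x ^ (countMap n z).1 x := by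
          apply Finset.sum_congr rfl
          intro j _
          rw [Finset.mul_sum]
  rw [hlin]
  have hθ1 : ∑ x, θ.1 x = 1 := θ.2.2
  have heach : ∀ j ∈ q.support, q.coeff j * Mn (prodFirst f n j) θ.1
      = q.coeff j * (∑ x, θ.1 x * f x) ^ j := by
    intro j hjs
    have hj : j ≤ n := le_trans (Polynomial.le_natDegree_of_mem_supp j hjs) hdeg
    rw [Mn_prodFirst f n j hj, hθ1, one_pow, mul_one]
  rw [Finset.sum_congr rfl heach]
  rw [Polynomial.eval_eq_sum, Polynomial.sum_def]

lemma Gstar_bound (B : ℝ) (hB : ∀ x, |f x| ≤ B) (hB0 : 0 ≤ B)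
    (q : Polynomial ℝ) (n : ℕ) (hdeg : q.natDegree ≤ n) (hn : 0 < n) (m : CVec X n) :
    |MuHy (fun z => ∑ j ∈ q.support, q.coeff j * prodFirst f n j z) m
        - Polynomial.eval (((n : ℕ) : ℝ)⁻¹ * ∑ x, (m.1 x : ℝ) * f x) q|
      ≤ ∑ j ∈ q.support, |q.coeff j|
          * (B ^ j * (2 * (1 - ((n.descFactorial j : ℕ) : ℝ) / ((n : ℕ) : ℝ) ^ j))) := by
  have hlin : MuHy (fun z => ∑ j ∈ q.support, q.coeff j * prodFirst f n j z) m
      = ∑ j ∈ q.support, q.coeff j * MuHy (prodFirst f n j) m := by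
    unfold MuHy
    calc (∑ z ∈ Finset.univ.filter (fun z : Fin n → X => countMap n z = m),
            ∑ j ∈ q.support, q.coeff j * prodFirst f n j z) / (nu m : ℝ)
        = (∑ j ∈ q.support, q.coeff j
            * ∑ z ∈ Finset.univ.filter (fun z : Fin n → X => countMap n z = m),
                prodFirst f n j z) / (nu m : ℝ) := by
          congr 1
          rw [Finset.sum_comm]
          apply Finset.sum_congr rfl
          intro j _
          rw [Finset.mul_sum]
      _ = ∑ j ∈ q.support, (q.coeff j
            * ∑ z ∈ Finset.univ.filter (fun z : Fin n → X => countMap n z = m),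
                prodFirst f n j z) / (nu m : ℝ) := Finset.sum_div _ _ _
      _ = ∑ j ∈ q.support, q.coeff j
            * ((∑ z ∈ Finset.univ.filter (fun z : Fin n → X => countMap n z = m),
                prodFirst f n j z) / (nu m : ℝ)) := by
          apply Finset.sum_congr rfl
          intro j _
          rw [mul_div_assoc]
  have heval : Polynomial.eval (((n : ℕ) : ℝ)⁻¹ * ∑ x, (m.1 x : ℝ) * f x) q
      = ∑ j ∈ q.support, q.coeff j * (((n : ℕ) : ℝ)⁻¹ * ∑ x, (m.1 x : ℝ) * f x) ^ j := by
    rw [Polynomial.eval_eq_sum, Polynomial.sum_def]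
  rw [hlin, heval, ← Finset.sum_sub_distrib]
  calc |∑ j ∈ q.support, (q.coeff j * MuHy (prodFirst f n j) m
          - q.coeff j * (((n : ℕ) : ℝ)⁻¹ * ∑ x, (m.1 x : ℝ) * f x) ^ j)|
      ≤ ∑ j ∈ q.support, |q.coeff j * MuHy (prodFirst f n j) m
          - q.coeff j * (((n : ℕ) : ℝ)⁻¹ * ∑ x, (m.1 x : ℝ) * f x) ^ j| :=
        Finset.abs_sum_le_sum_abs _ _
    _ ≤ ∑ j ∈ q.support, |q.coeff j|
          * (B ^ j * (2 * (1 - ((n.descFactorial j : ℕ) : ℝ) / ((n : ℕ) : ℝ) ^ j))) := by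
        apply Finset.sum_le_sum
        intro j hjs
        have hj : j ≤ n := le_trans (Polynomial.le_natDegree_of_mem_supp j hjs) hdeg
        rw [← mul_sub, abs_mul]
        exact mul_le_mul_of_nonneg_left (keybound f B hB hB0 j n hj hn m) (abs_nonneg _)

end Aux5


set_option maxHeartbeats 1000000

/-- convergence in distribution of the sample means: for a gamble `f` on `X`
and continuous `h : ℝ → ℝ`, `Q^n(m ↦ h((1/n)∑ₓ mₓ f(x)))` converges; if `h` is a polynomial
function, the limit equals `S(θ ↦ h(∑ₓ θₓ f(x)))`. -/
theorem stmt13 {X : Type*} [Fintype X] [DecidableEq X] [Nonempty X]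
    (P : ∀ n : ℕ, ((Fin n → X) → ℝ) → ℝ)
    (hP : ∀ n : ℕ, 1 ≤ n → LowerPrevCoherent (P n) ∧ Exchangeable (P n))
    (htc : PTimeConsistent P)
    (Q : ∀ n : ℕ, (CVec X n → ℝ) → ℝ)
    (hQ : ∀ (n : ℕ) (h : CVec X n → ℝ), Q n h = P n (fun z => h (countMap n z)))
    (S : (SimplexPt X → ℝ) → ℝ)
    (hS : CoherentOnPoly S ∧
      ∀ n : ℕ, 1 ≤ n → ∀ g : CVec X n → ℝ, Q n g = S (CoMnP g))
    (f : X → ℝ) (h : ℝ → ℝ) (hcont : Continuous h) :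
    ∃ l : ℝ,
      Tendsto
        (fun n : ℕ => Q (n + 1)
          (fun m : CVec X (n + 1) => h (((n : ℝ) + 1)⁻¹ * ∑ x, (m.1 x : ℝ) * f x)))
        atTop (𝓝 l) ∧
      ∀ q : Polynomial ℝ, (∀ t : ℝ, h t = q.eval t) →
        l = S (fun θ : SimplexPt X => h (∑ x, θ.1 x * f x)) := by
    classical
  set B : ℝ := ∑ x, |f x| with hBdef
  have hB : ∀ x, |f x| ≤ B :=
    fun x => Finset.single_le_sum (fun y _ => abs_nonneg (f y)) (Finset.mem_univ x)
  have hB0 : 0 ≤ B := Finset.sum_nonneg fun y _ => abs_nonneg (f y)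
  -- the sequence of interest
  set a : ℕ → ℝ := fun n => Q (n + 1)
    (fun m : CVec X (n + 1) => h (((n : ℝ) + 1)⁻¹ * ∑ x, (m.1 x : ℝ) * f x)) with hadef
  -- the sample mean is bounded by B
  have hmean : ∀ (n : ℕ) (m : CVec X (n+1)),
      |((n : ℝ) + 1)⁻¹ * ∑ x, (m.1 x : ℝ) * f x| ≤ B := by
    intro n m
    have hpos : (0:ℝ) < (n : ℝ) + 1 := by positivity
    have hsum : (∑ x, (m.1 x : ℝ)) = (n : ℝ) + 1 := by
      exact_mod_cast m.2
    rw [abs_mul, abs_inv, abs_of_pos hpos]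
    calc ((n : ℝ) + 1)⁻¹ * |∑ x, (m.1 x : ℝ) * f x|
        ≤ ((n : ℝ) + 1)⁻¹ * ∑ x, (m.1 x : ℝ) * B := by
          apply mul_le_mul_of_nonneg_left _ (by positivity)
          calc |∑ x, (m.1 x : ℝ) * f x| ≤ ∑ x, |(m.1 x : ℝ) * f x| :=
                Finset.abs_sum_le_sum_abs _ _
            _ ≤ ∑ x, (m.1 x : ℝ) * B := by
                apply Finset.sum_le_sum
                intro x _
                rw [abs_mul, abs_of_nonneg (by positivity : (0:ℝ) ≤ (m.1 x : ℝ))]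
                exact mul_le_mul_of_nonneg_left (hB x) (by positivity)
      _ = B := by
          rw [← Finset.sum_mul, hsum]
          field_simp
  -- Q is 1-Lipschitz w.r.t. sup distance
  have hQlip : ∀ (n : ℕ) (g g' : CVec X (n+1) → ℝ) (c : ℝ),
      (∀ m, |g m - g' m| ≤ c) → |Q (n+1) g - Q (n+1) g'| ≤ c := by
    intro n g g' c hc
    rw [hQ, hQ]
    exact P_lip (P (n+1)) (hP (n+1) (by omega)).1 _ _ c (fun z => hc (countMap (n+1) z))
  -- the polynomial approximating sequences
  set aq : Polynomial ℝ → ℕ → ℝ := fun q n => Q (n + 1)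
    (fun m : CVec X (n + 1) =>
      Polynomial.eval (((n : ℝ) + 1)⁻¹ * ∑ x, (m.1 x : ℝ) * f x) q) with haqdef
  set Tq : Polynomial ℝ → ℝ :=
    fun q => S (fun θ : SimplexPt X => Polynomial.eval (∑ x, θ.1 x * f x) q) with hTqdef
  have hcastn : ∀ n : ℕ, (((n + 1 : ℕ) : ℕ) : ℝ) = (n : ℝ) + 1 := by
    intro n; push_cast; ring
  -- each aq q converges to Tq q
  have haq : ∀ q : Polynomial ℝ, Tendsto (aq q) atTop (𝓝 (Tq q)) := by
    intro q
    set ε : ℕ → ℝ := fun n => ∑ j ∈ q.support, |q.coeff j|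
      * (B ^ j * (2 * (1 - (((n+1).descFactorial j : ℕ) : ℝ) / ((n : ℝ) + 1) ^ j)))
      with hεdef
    have hεlim : Tendsto ε atTop (𝓝 0) := by
      have : Tendsto (fun n : ℕ => ∑ j ∈ q.support, |q.coeff j|
          * (B ^ j * (2 * (1 - (((n+1).descFactorial j : ℕ) : ℝ)
            / ((n : ℝ) + 1) ^ j)))) atTop (𝓝 (∑ j ∈ q.support, (0:ℝ))) := by
        apply tendsto_finset_sum
        intro j _
        have h0 : Tendsto (fun n : ℕ =>
            (((n+1).descFactorial j : ℕ) : ℝ) / (((n+1) : ℕ) : ℝ) ^ j) atTop (𝓝 1) :=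
          (alpha_lim j).comp (tendsto_add_atTop_nat 1)
        have h1 : Tendsto (fun n : ℕ =>
            (((n+1).descFactorial j : ℕ) : ℝ) / ((n : ℝ) + 1) ^ j) atTop (𝓝 1) := by
          apply (tendsto_congr ?_).1 h0
          intro n
          rw [hcastn n]
        have h2 := h1.const_sub 1
        rw [sub_self] at h2
        have h3 := h2.const_mul (|q.coeff j| * (B ^ j * 2))
        rw [mul_zero] at h3
        convert h3 using 2 with n
        ring
      rw [Finset.sum_const, smul_zero] at this
      exact this
    have hbound : ∀ᶠ n in atTop, |aq q n - Tq q| ≤ ε n := by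
      filter_upwards [eventually_ge_atTop q.natDegree] with n hn
      have hdeg : q.natDegree ≤ n + 1 := by omega
      -- Q applied to the MuHy representative equals Tq q
      have hGstarQ : Q (n+1) (fun m : CVec X (n+1) =>
          MuHy (fun z => ∑ j ∈ q.support, q.coeff j * prodFirst f (n+1) j z) m) = Tq q := by
        rw [hS.2 (n+1) (by omega)]
        congr 1
        funext θ
        exact CoMn_Gstar f q (n+1) hdeg θ
      rw [← hGstarQ]
      apply hQlip
      intro m
      have hb := Gstar_bound f B hB hB0 q (n+1) hdeg (by omega) m
      rw [hcastn n] at hb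
      rw [abs_sub_comm]
      exact hb
    have hz : Tendsto (fun n => aq q n - Tq q) atTop (𝓝 0) := by
      apply squeeze_zero_norm' _ hεlim
      filter_upwards [hbound] with n hn
      simpa [Real.norm_eq_abs] using hn
    have := hz.add (tendsto_const_nhds (x := Tq q))
    rw [zero_add] at this
    convert this using 2 with n
    ring
  -- a is within ε of aq for a Weierstrass approximation
  have hclose : ∀ (q : Polynomial ℝ) (δ : ℝ),
      (∀ t ∈ Set.Icc (-B) B, |Polynomial.eval t q - h t| ≤ δ) →
      ∀ n, |a n - aq q n| ≤ δ := by
    intro q δ hqδ n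
    apply hQlip
    intro m
    have hm := hmean n m
    have : ((n : ℝ) + 1)⁻¹ * ∑ x, (m.1 x : ℝ) * f x ∈ Set.Icc (-B) B := by
      rw [Set.mem_Icc]
      constructor <;> [linarith [abs_le.1 hm |>.1]; linarith [abs_le.1 hm |>.2]]
    have := hqδ _ this
    rw [abs_sub_comm] at this
    exact this
  -- a is a Cauchy sequence
  have hcauchy : CauchySeq a := by
    rw [Metric.cauchySeq_iff']
    intro ε hε
    obtain ⟨q, hq⟩ := exists_polynomial_near_of_continuousOn (-B) B h
      hcont.continuousOn (ε/4) (by positivity)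
    have hq' : ∀ t ∈ Set.Icc (-B) B, |Polynomial.eval t q - h t| ≤ ε/4 :=
      fun t ht => (hq t ht).le
    have hcl := hclose q (ε/4) hq' 
    have hcs : CauchySeq (aq q) := (haq q).cauchySeq
    rw [Metric.cauchySeq_iff'] at hcs
    obtain ⟨N, hN⟩ := hcs (ε/4) (by positivity)
    refine ⟨N, fun n hn => ?_⟩
    have h1 := hcl n
    have h2 := hcl N
    have h3 := hN n hn
    rw [Real.dist_eq] at h3 ⊢
    have key : |a n - a N| ≤ |a n - aq q n| + |aq q n - aq q N| + |aq q N - a N| := by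
      have t1 := abs_sub_le (a n) (aq q n) (a N)
      have t2 := abs_sub_le (aq q n) (aq q N) (a N)
      linarith
    have h2' : |aq q N - a N| = |a N - aq q N| := abs_sub_comm _ _
    linarith
  obtain ⟨l, hl⟩ := cauchySeq_tendsto_of_complete hcauchy
  refine ⟨l, hl, ?_⟩
  intro q hqeq
  have haeq : a = aq q := by
    funext n
    simp only [hadef, haqdef]
    congr 1
    funext m
    rw [hqeq]
  rw [haeq] at hl
  have : l = Tq q := tendsto_nhds_unique hl (haq q)
  rw [this]
  show S (fun θ : SimplexPt X => Polynomial.eval (∑ x, θ.1 x * f x) q)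
    = S (fun θ : SimplexPt X => h (∑ x, θ.1 x * f x))
  congr 1
  funext θ
  rw [hqeq]
end

section
/- Let N ≥ 1. The functional E on ℒ(𝒳^N) defined by E(f) := min_{m∈𝒩^N} MuHy^N(f|m) is a coherent exchangeable lower prevision on ℒ(𝒳^N), and it is the point-wise smallest one: every coherent exchangeable lower prevision P on ℒ(𝒳^N) satisfies P(f) ≥ E(f) for every gamble f on 𝒳^N. -/
open Finset Filter Topology

/-!
Averaging a gamble over all permutations of the coordinates yields, at `z`, its hypergeometric
prevision `MuHy f (T z)`, because `π ↦ z ∘ π` hits every word with the counts of `z` exactly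
`∏ₓ mₓ!` times. So `E` is the lower envelope of the exchangeable linear previsions `MuHy · m`,
hence coherent and exchangeable. Conversely, for a coherent exchangeable `P` and the symmetrisation
`f̄` of `f`, exchangeability and superadditivity give `P (f - f̄) ≥ 0`, so
`P f ≥ P f̄ ≥ min f̄ ≥ E f`.
-/

section LowerEnvelope

variable {Ω : Type*} [Fintype Ω] [Nonempty Ω] {P : (Ω → ℝ) → ℝ}

lemma LowerPrevCoherent.map_zero (hP : LowerPrevCoherent P) : P 0 = 0 := by
  simpa [← Pi.zero_def] using hP.2.1 0 0 le_rfl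

lemma LowerPrevCoherent.sum_le_map_sum (hP : LowerPrevCoherent P) {ι : Type*} (s : Finset ι)
    (q : ι → Ω → ℝ) : ∑ i ∈ s, P (q i) ≤ P (∑ i ∈ s, q i) := by
  classical
  induction s using Finset.induction_on with
  | empty => simp [hP.map_zero]
  | insert a s ha ih =>
    rw [sum_insert ha, sum_insert ha]
    exact (add_le_add le_rfl ih).trans (hP.2.2 _ _)

theorem LowerPrevCoherent.iInf {ι : Type*} [Finite ι] [Nonempty ι] {P : ι → (Ω → ℝ) → ℝ}
    (hP : ∀ i, LowerPrevCoherent (P i)) : LowerPrevCoherent fun f => ⨅ i, P i f := by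
  have hbdd : ∀ f, BddBelow (Set.range fun i => P i f) := fun f => (Set.finite_range _).bddBelow
  refine ⟨fun f => le_ciInf fun i => (hP i).1 f, fun f l hl => ?_,
    fun f g => le_ciInf fun i => ?_⟩
  · simp only [(hP _).2.1 f l hl, Real.mul_iInf_of_nonneg hl]
  · exact (add_le_add (ciInf_le (hbdd f) i) (ciInf_le (hbdd g) i)).trans ((hP i).2.2 f g)

end LowerEnvelope

section Exchangeable

variable {X : Type*} {N : ℕ}

theorem Exchangeable.iInf {ι : Type*} [Nonempty ι] {P : ι → ((Fin N → X) → ℝ) → ℝ}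
    (hP : ∀ i, Exchangeable (P i)) : Exchangeable fun f => ⨅ i, P i f :=
  fun f π => le_ciInf fun i => hP i f π

lemma Exchangeable.nonneg_sub_comp {P : ((Fin N → X) → ℝ) → ℝ} (hP : Exchangeable P)
    (f : (Fin N → X) → ℝ) (π : Equiv.Perm (Fin N)) : 0 ≤ P fun x => f x - f (x ∘ π) := by
  simpa [Function.comp_def] using hP (fun x => f (x ∘ π)) π⁻¹

end Exchangeable

section Counting

variable {X : Type*} [Fintype X] [DecidableEq X] {N : ℕ}

lemma card_subtype_eq_countMap (z : Fin N → X) (x : X) :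
    Fintype.card {k // z k = x} = (countMap N z).1 x :=
  Fintype.card_subtype _

lemma countMap_comp_perm (z : Fin N → X) (π : Equiv.Perm (Fin N)) :
    countMap N (z ∘ π) = countMap N z :=
  Subtype.ext <| funext fun x => by
    simp only [← card_subtype_eq_countMap]
    exact Fintype.card_congr (π.subtypeEquiv fun _ => Iff.rfl)

lemma exists_countMap_eq (m : CVec X N) : ∃ z : Fin N → X, countMap N z = m := by
  have hcard : Fintype.card (Σ x, Fin (m.1 x)) = N := by simp [m.2]
  let e : Fin N ≃ Σ x, Fin (m.1 x) := (Fintype.equivFinOfCardEq hcard).symm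
  refine ⟨Sigma.fst ∘ e, Subtype.ext <| funext fun x => ?_⟩
  rw [← card_subtype_eq_countMap, ← Fintype.card_fin (m.1 x)]
  exact Fintype.card_congr ((e.subtypeEquiv fun _ => Iff.rfl).trans (Equiv.sigmaSubtype x))

lemma exists_perm_of_countMap_eq {z w : Fin N → X} (h : countMap N z = countMap N w) :
    ∃ τ : Equiv.Perm (Fin N), z ∘ τ = w := by
  have e : ∀ x : X, { k // w k = x } ≃ { k // z k = x } := fun x =>
    Fintype.equivOfCardEq <| by
      simp only [card_subtype_eq_countMap, h]
  exact ⟨Equiv.ofFiberEquiv e, funext (Equiv.ofFiberEquiv_map e)⟩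

lemma card_perm_comp_eq {z w : Fin N → X} (h : countMap N z = countMap N w) :
    #{π : Equiv.Perm (Fin N) | z ∘ π = w} = ∏ x, Nat.factorial ((countMap N z).1 x) := by
  obtain ⟨τ, rfl⟩ := exists_perm_of_countMap_eq h
  rw [← Fintype.card_subtype]
  simp only [← card_subtype_eq_countMap, ← DomMulAct.stabilizer_card]
  refine Fintype.card_congr (Equiv.subtypeEquiv (Equiv.mulRight τ⁻¹) fun σ => ?_)
  exact (τ.comp_symm_eq z (z ∘ σ)).symm

lemma sum_perm_comp (f : (Fin N → X) → ℝ) (z : Fin N → X) :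
    ∑ π : Equiv.Perm (Fin N), f (z ∘ π)
      = (∏ x, Nat.factorial ((countMap N z).1 x) : ℕ) *
          ∑ w with countMap N w = countMap N z, f w := by
  rw [← sum_fiberwise_of_maps_to (g := fun π : Equiv.Perm (Fin N) => z ∘ π)
    (t := {w | countMap N w = countMap N z}) (fun π _ => by simp [countMap_comp_perm]),
    mul_sum]
  refine sum_congr rfl fun w hw => ?_
  rw [sum_congr rfl fun π hπ => congrArg f (mem_filter.mp hπ).2, sum_const,
    card_perm_comp_eq (mem_filter.mp hw).2.symm, nsmul_eq_mul]

lemma muHy_countMap (f : (Fin N → X) → ℝ) (z : Fin N → X) :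
    MuHy f (countMap N z) = (∑ π : Equiv.Perm (Fin N), f (z ∘ π)) / (Nat.factorial N) := by
  have hspec : (∏ x, Nat.factorial ((countMap N z).1 x) : ℕ) * nu (countMap N z)
      = Nat.factorial N :=
    (Nat.multinomial_spec _ _).trans (congrArg Nat.factorial (countMap N z).2)
  have hnu : (nu (countMap N z) : ℝ) ≠ 0 := Nat.cast_ne_zero.mpr (Nat.multinomial_pos _ _).ne'
  rw [sum_perm_comp, MuHy, ← hspec]
  push_cast
  field_simp

end Counting

section MuHy

variable {X : Type*} [Fintype X] [DecidableEq X] {N : ℕ}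

lemma sInf_range_le_muHy (f : (Fin N → X) → ℝ) (m : CVec X N) :
    sInf (Set.range f) ≤ MuHy f m := by
  obtain ⟨z, rfl⟩ := exists_countMap_eq m
  rw [muHy_countMap, le_div_iff₀ (by positivity)]
  have hsum := card_nsmul_le_sum univ (fun π : Equiv.Perm (Fin N) => f (z ∘ π)) _
    fun π _ => csInf_le (Set.finite_range f).bddBelow ⟨z ∘ π, rfl⟩
  simpa [Fintype.card_perm, mul_comm] using hsum

lemma lowerPrevCoherent_muHy [Nonempty X] (m : CVec X N) :
    LowerPrevCoherent fun f => MuHy f m := by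
  refine ⟨fun f => sInf_range_le_muHy f m, fun f l _ => ?_, fun f g => ?_⟩
  · simp only [MuHy, ← mul_sum, mul_div_assoc]
  · simp only [MuHy, Pi.add_apply, sum_add_distrib, add_div, le_refl]

lemma exchangeable_muHy (m : CVec X N) : Exchangeable fun f => MuHy f m := by
  intro f π
  obtain ⟨z, rfl⟩ := exists_countMap_eq m
  simp only [muHy_countMap, sum_sub_distrib]
  exact div_nonneg (sub_nonneg.mpr (Fintype.sum_equiv (Equiv.mulRight π) _ _ fun σ => rfl).ge)
    (by positivity)

theorem LowerPrevCoherent.iInf_muHy_le [Nonempty X] {P : ((Fin N → X) → ℝ) → ℝ}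
    (hP : LowerPrevCoherent P) (hx : Exchangeable P) (f : (Fin N → X) → ℝ) :
    ⨅ m : CVec X N, MuHy f m ≤ P f := by
  set g : (Fin N → X) → ℝ := fun z => MuHy f (countMap N z)
  have hg : ⨅ m : CVec X N, MuHy f m ≤ P g := by
    refine (le_csInf (Set.range_nonempty g) ?_).trans (hP.1 g)
    rintro _ ⟨z, rfl⟩
    exact ciInf_le (Set.finite_range _).bddBelow _
  have hfg : f - g = fun z => (N.factorial : ℝ)⁻¹ *
      (∑ π : Equiv.Perm (Fin N), fun x => f x - f (x ∘ π)) z := by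
    funext z
    simp only [Pi.sub_apply, g, muHy_countMap, Finset.sum_apply, sum_sub_distrib, sum_const,
      card_univ, Fintype.card_perm, Fintype.card_fin, nsmul_eq_mul]
    field_simp
  have hrest : 0 ≤ P (f - g) := by
    rw [hfg, hP.2.1 _ _ (by positivity)]
    exact mul_nonneg (by positivity) ((sum_nonneg fun π _ => hx.nonneg_sub_comp f π).trans
      (hP.sum_le_map_sum univ _))
  have hsuper := hP.2.2 g (f - g)
  rw [add_sub_cancel] at hsuper
  linarith

end MuHy

theorem stmt14_general {X : Type*} [Fintype X] [DecidableEq X] [Nonempty X] {N : ℕ}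
    (E : ((Fin N → X) → ℝ) → ℝ)
    (hE : ∀ f : (Fin N → X) → ℝ, E f = sInf (Set.range fun m : CVec X N => MuHy f m)) :
    LowerPrevCoherent E ∧ Exchangeable E ∧
      ∀ P : ((Fin N → X) → ℝ) → ℝ, LowerPrevCoherent P → Exchangeable P →
        ∀ f : (Fin N → X) → ℝ, E f ≤ P f := by
  obtain rfl : E = fun f => ⨅ m : CVec X N, MuHy f m := funext hE
  exact ⟨LowerPrevCoherent.iInf lowerPrevCoherent_muHy, Exchangeable.iInf exchangeable_muHy,
    fun P hP hx f => hP.iInf_muHy_le hx f⟩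

/-- the vacuous-count model `E(f) := min_m MuHy^N(f|m)` is the point-wise
smallest coherent exchangeable lower prevision on `ℒ(X^N)`. -/
theorem stmt14 {X : Type*} [Fintype X] [DecidableEq X] [Nonempty X] {N : ℕ} (hN : 1 ≤ N)
    (E : ((Fin N → X) → ℝ) → ℝ)
    (hE : ∀ f : (Fin N → X) → ℝ, E f = sInf (Set.range fun m : CVec X N => MuHy f m)) :
    LowerPrevCoherent E ∧ Exchangeable E ∧
      ∀ P : ((Fin N → X) → ℝ) → ℝ, LowerPrevCoherent P → Exchangeable P →
        ∀ f : (Fin N → X) → ℝ, E f ≤ P f :=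
  stmt14_general E hE
end
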